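/- arXiv:2412.16532 — 2 statements merged into one kernel-verified Lean document; each statement's English description precedes it below -/
import Mathlib

section
/- For every real ε with 0 < ε < 1 there exist a real number r > 0 and a sequence of functions e_k : ℝ → ℝ (k ∈ ℕ) such that each e_k is infinitely differentiable and non-increasing on [0, ∞), and: (i) e_k(0) = e_l(0) for all k, l; (ii) for every k ≠ l there exists a sequence of positive times t_n with t_n → 0 such that e_k(t_n) ≠ e_l(t_n) for all n; (iii) e_k′(t) ≤ −1/2 for all t ∈ [0, r) and all k; (iv) sup_{t ≥ 0} |e_k′(t)| = 1, inf_{t ≥ 0} e_k(t) = ε/2, and sup_{t ≥ 0} e_k(t) = ε for all k. -/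
open Real Set Filter

/-- The energy profile: `ep ε b t = ε/2 + (ε/2) exp (-(2t/ε + b t²))`. -/
noncomputable def ep (ε b t : ℝ) : ℝ := ε / 2 + ε / 2 * Real.exp (-(2 / ε * t + b * t ^ 2))

lemma ep_hasDerivAt {ε : ℝ} (hε : 0 < ε) (b t : ℝ) :
    HasDerivAt (ep ε b) (-((1 + ε * b * t) * Real.exp (-(2 / ε * t + b * t ^ 2)))) t := by
  have h1 : HasDerivAt (fun s : ℝ => 2 / ε * s + b * s ^ 2)
      (2 / ε * 1 + b * ((2 : ℕ) * t ^ (2 - 1))) t :=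
    ((hasDerivAt_id t).const_mul (2 / ε)).add ((hasDerivAt_pow 2 t).const_mul b)
  have h2 := (h1.neg.exp).const_mul (ε / 2)
  have h3 := h2.const_add (ε / 2)
  refine HasDerivAt.congr_deriv (f := ep ε b) h3 ?_
  have hε' : ε ≠ 0 := ne_of_gt hε
  push_cast
  simp only [Pi.neg_apply]
  field_simp

lemma ep_deriv {ε : ℝ} (hε : 0 < ε) (b t : ℝ) :
    deriv (ep ε b) t = -((1 + ε * b * t) * Real.exp (-(2 / ε * t + b * t ^ 2))) :=
  (ep_hasDerivAt hε b t).deriv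

lemma ep_deriv_nonpos {ε : ℝ} (hε : 0 < ε) {b t : ℝ} (hb : 0 ≤ b) (ht : 0 ≤ t) :
    deriv (ep ε b) t ≤ 0 := by
  rw [ep_deriv hε]
  have h1 : 0 ≤ 1 + ε * b * t := by positivity
  have h2 : 0 ≤ Real.exp (-(2 / ε * t + b * t ^ 2)) := (Real.exp_pos _).le
  nlinarith

lemma ep_deriv_ge {ε : ℝ} (hε : 0 < ε) (hε1 : ε < 1) {b t : ℝ} (hb0 : 0 ≤ b) (hb1 : b ≤ 1)
    (ht : 0 ≤ t) : -1 ≤ deriv (ep ε b) t := by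
  rw [ep_deriv hε]
  have key : 1 + ε * b * t ≤ Real.exp (2 / ε * t + b * t ^ 2) := by
    have h1 : ε * b * t ≤ 2 / ε * t + b * t ^ 2 := by
      have h2 : ε * b ≤ 2 / ε := by
        rw [le_div_iff₀ hε]
        nlinarith [mul_le_mul_of_nonneg_left hb1 (mul_nonneg hε.le hε.le),
          mul_pos hε (show (0:ℝ) < 1 - ε by linarith)]
      nlinarith [mul_le_mul_of_nonneg_right h2 ht]
    nlinarith [Real.add_one_le_exp (2 / ε * t + b * t ^ 2)]
  have h3 : (1 + ε * b * t) * Real.exp (-(2 / ε * t + b * t ^ 2)) ≤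
      Real.exp (2 / ε * t + b * t ^ 2) * Real.exp (-(2 / ε * t + b * t ^ 2)) :=
    mul_le_mul_of_nonneg_right key (Real.exp_pos _).le
  rw [← Real.exp_add] at h3
  simp only [add_neg_cancel, Real.exp_zero] at h3
  linarith

lemma ep_antitoneOn {ε : ℝ} (hε : 0 < ε) {b : ℝ} (hb : 0 ≤ b) :
    AntitoneOn (ep ε b) (Set.Ici (0 : ℝ)) := by
  apply antitoneOn_of_deriv_nonpos (convex_Ici 0)
  · exact fun t _ => ((ep_hasDerivAt hε b t).differentiableAt.continuousAt).continuousWithinAt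
  · exact fun t _ => (ep_hasDerivAt hε b t).differentiableAt.differentiableWithinAt
  · intro t ht
    rw [interior_Ici] at ht
    exact ep_deriv_nonpos hε hb (le_of_lt ht)

lemma ep_zero {ε : ℝ} (hε : 0 < ε) (b : ℝ) : ep ε b 0 = ε := by
  simp [ep]

/-- Proposition 3.3 (deterministic part): choice of energy profiles.
For every `ε ∈ (0,1)` there exist `r > 0` and smooth, non-increasing (on `[0,∞)`)
profiles `e k : ℝ → ℝ` with common initial value, pairwise distinguished along
sequences of positive times tending to `0`, with derivative `≤ -1/2` on `[0,r)`,
`C¹`-seminorm `sup_{t ≥ 0} |e_k'(t)| = 1`, infimum `ε/2` and supremum `ε` on `[0,∞)`. -/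
theorem energy_profiles_choice :
    ∀ ε : ℝ, 0 < ε → ε < 1 →
      ∃ r : ℝ, 0 < r ∧ ∃ e : ℕ → ℝ → ℝ,
        (∀ k, ContDiff ℝ (⊤ : ℕ∞) (e k)) ∧
        (∀ k, AntitoneOn (e k) (Set.Ici (0 : ℝ))) ∧
        (∀ k l, e k 0 = e l 0) ∧
        (∀ k l, k ≠ l →
          ∃ t : ℕ → ℝ, (∀ n, 0 < t n) ∧
            Filter.Tendsto t Filter.atTop (nhds 0) ∧
            ∀ n, e k (t n) ≠ e l (t n)) ∧
        (∀ k, ∀ s ∈ Set.Ico (0 : ℝ) r, deriv (e k) s ≤ -(1/2)) ∧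
        (∀ k,
          sSup ((fun s => |deriv (e k) s|) '' Set.Ici (0 : ℝ)) = 1 ∧
          sInf (e k '' Set.Ici (0 : ℝ)) = ε / 2 ∧
          sSup (e k '' Set.Ici (0 : ℝ)) = ε) := by
  intro ε hε hε1
  have hb0 : ∀ k : ℕ, (0:ℝ) < 1 / ((k : ℝ) + 1) := fun k => by positivity
  have hb1 : ∀ k : ℕ, (1:ℝ) / ((k : ℝ) + 1) ≤ 1 := fun k => by
    rw [div_le_one (by positivity)]
    simp
  refine ⟨ε / 8, by positivity, fun k => ep ε (1 / ((k : ℝ) + 1)), ?_, ?_, ?_, ?_, ?_, ?_⟩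
  · -- smoothness
    intro k
    show ContDiff ℝ (⊤ : ℕ∞) (ep ε (1 / ((k : ℝ) + 1)))
    apply ContDiff.add contDiff_const
    apply ContDiff.mul contDiff_const
    apply Real.contDiff_exp.comp
    apply ContDiff.neg
    exact (contDiff_const.mul contDiff_id).add (contDiff_const.mul (contDiff_id.pow 2))
  · exact fun k => ep_antitoneOn hε (hb0 k).le
  · intro k l
    show ep ε (1 / ((k : ℝ) + 1)) 0 = ep ε (1 / ((l : ℝ) + 1)) 0
    rw [ep_zero hε, ep_zero hε]
  · -- (ii) distinguishing sequences
    intro k l hkl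
    refine ⟨fun n => 1 / ((n : ℝ) + 1), fun n => by positivity,
      tendsto_one_div_add_atTop_nhds_zero_nat, fun n => ?_⟩
    set t : ℝ := 1 / ((n : ℝ) + 1) with htdef
    have ht : 0 < t := by positivity
    intro h
    have h' : ep ε (1 / ((k : ℝ) + 1)) t = ep ε (1 / ((l : ℝ) + 1)) t := h
    have h1 : ε / 2 * Real.exp (-(2 / ε * t + 1 / ((k : ℝ) + 1) * t ^ 2)) =
        ε / 2 * Real.exp (-(2 / ε * t + 1 / ((l : ℝ) + 1) * t ^ 2)) := by
      have := h'
      simp only [ep] at this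
      linarith
    have h2 : Real.exp (-(2 / ε * t + 1 / ((k : ℝ) + 1) * t ^ 2)) =
        Real.exp (-(2 / ε * t + 1 / ((l : ℝ) + 1) * t ^ 2)) :=
      mul_left_cancel₀ (by positivity) h1
    have h3 := Real.exp_injective h2
    have h4 : 1 / ((k : ℝ) + 1) * t ^ 2 = 1 / ((l : ℝ) + 1) * t ^ 2 := by linarith
    have h5 : 1 / ((k : ℝ) + 1) = 1 / ((l : ℝ) + 1) :=
      mul_right_cancel₀ (by positivity) h4
    rw [div_eq_div_iff (by positivity) (by positivity)] at h5
    have : k = l := by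
      have hkl' : (k : ℝ) = (l : ℝ) := by linarith
      exact_mod_cast hkl'
    exact hkl this
  · -- (iii) derivative ≤ -1/2 on [0, ε/8)
    intro k s hs
    obtain ⟨hs0, hs1⟩ := hs
    show deriv (ep ε (1 / ((k : ℝ) + 1))) s ≤ -(1/2)
    rw [ep_deriv hε]
    have hbk0 := (hb0 k).le
    have hbk1 := hb1 k
    have hx : 2 / ε * s + 1 / ((k : ℝ) + 1) * s ^ 2 ≤ 1 / 2 := by
      have h1 : 2 / ε * s ≤ 1 / 4 := by
        rw [div_mul_eq_mul_div, div_le_div_iff₀ hε (by norm_num)]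
        nlinarith
      have h2 : 1 / ((k : ℝ) + 1) * s ^ 2 ≤ 1 / 4 := by
        have : s ≤ 1 / 8 := by nlinarith
        nlinarith
      linarith
    have hexp : (1 : ℝ) / 2 ≤ Real.exp (-(2 / ε * s + 1 / ((k : ℝ) + 1) * s ^ 2)) := by
      have := Real.add_one_le_exp (-(2 / ε * s + 1 / ((k : ℝ) + 1) * s ^ 2))
      linarith
    have hA : 1 ≤ 1 + ε * (1 / ((k : ℝ) + 1)) * s := by
      nlinarith [mul_nonneg (mul_nonneg hε.le hbk0) hs0]
    nlinarith [Real.exp_pos (-(2 / ε * s + 1 / ((k : ℝ) + 1) * s ^ 2))]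
  · -- (iv)
    intro k
    have hbk0 := hb0 k
    have hbk1 := hb1 k
    refine ⟨?_, ?_, ?_⟩
    · -- sSup of |deriv| = 1
      show sSup ((fun s => |deriv (ep ε (1 / ((k : ℝ) + 1))) s|) '' Set.Ici (0 : ℝ)) = 1
      apply IsGreatest.csSup_eq
      constructor
      · refine ⟨0, self_mem_Ici, ?_⟩
        show |deriv (ep ε (1 / ((k : ℝ) + 1))) 0| = 1
        rw [ep_deriv hε]
        norm_num
      · rintro y ⟨s, hs, rfl⟩
        show |deriv (ep ε (1 / ((k : ℝ) + 1))) s| ≤ 1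
        rw [abs_le]
        constructor
        · exact ep_deriv_ge hε hε1 hbk0.le hbk1 hs
        · exact le_trans (ep_deriv_nonpos hε hbk0.le hs) (by norm_num)
    · -- sInf = ε/2
      show sInf (ep ε (1 / ((k : ℝ) + 1)) '' Set.Ici (0 : ℝ)) = ε / 2
      have hlb : ∀ y ∈ ep ε (1 / ((k : ℝ) + 1)) '' Set.Ici (0 : ℝ), ε / 2 ≤ y := by
        rintro y ⟨s, _, rfl⟩
        have := Real.exp_pos (-(2 / ε * s + 1 / ((k : ℝ) + 1) * s ^ 2))
        simp only [ep]
        nlinarith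
      have hbdd : BddBelow (ep ε (1 / ((k : ℝ) + 1)) '' Set.Ici (0 : ℝ)) := ⟨ε / 2, hlb⟩
      apply le_antisymm
      · have h1 : Tendsto (fun n : ℕ => 2 / ε * (n : ℝ) + 1 / ((k : ℝ) + 1) * (n : ℝ) ^ 2)
            atTop atTop := by
          apply Tendsto.atTop_add_nonneg
          · exact (tendsto_natCast_atTop_atTop).const_mul_atTop (by positivity)
          · intro n; positivity
        have h2 : Tendsto (fun n : ℕ =>
            Real.exp (-(2 / ε * (n : ℝ) + 1 / ((k : ℝ) + 1) * (n : ℝ) ^ 2)))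
            atTop (nhds 0) :=
          Real.tendsto_exp_atBot.comp (tendsto_neg_atTop_atBot.comp h1)
        have h3 : Tendsto (fun n : ℕ => ep ε (1 / ((k : ℝ) + 1)) (n : ℝ))
            atTop (nhds (ε / 2)) := by
          have h4 :=
            Tendsto.add
              (tendsto_const_nhds : Tendsto (fun _ : ℕ => ε / 2) atTop (nhds (ε / 2)))
              (h2.const_mul (ε / 2))
          simpa [ep] using h4
        refine ge_of_tendsto h3 (Eventually.of_forall fun n => ?_)
        exact csInf_le hbdd ⟨(n : ℝ), mem_Ici.mpr (Nat.cast_nonneg n), rfl⟩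
      · exact le_csInf ⟨ep ε (1 / ((k : ℝ) + 1)) 0, ⟨0, self_mem_Ici, rfl⟩⟩ hlb
    · -- sSup = ε
      show sSup (ep ε (1 / ((k : ℝ) + 1)) '' Set.Ici (0 : ℝ)) = ε
      apply IsGreatest.csSup_eq
      constructor
      · exact ⟨0, self_mem_Ici, ep_zero hε _⟩
      · rintro y ⟨s, hs, rfl⟩
        calc ep ε (1 / ((k : ℝ) + 1)) s ≤ ep ε (1 / ((k : ℝ) + 1)) 0 :=
              ep_antitoneOn hε hbk0.le self_mem_Ici hs hs
          _ = ε := ep_zero hε _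
end

section
/- Let d ≥ 1, let 0 < β < α ≤ 1, let C_g ≥ 0, K ≥ 0 and ε̄ ≥ 0 be real. Suppose g : ℝ^d → ℝ satisfies |g(x) − g(y)| ≤ C_g·|x − y|^α for all x, y, and ψ : ℝ^d → ℝ^d satisfies |ψ(x) − ψ(y)| ≤ K·|x − y| and |ψ(x) − x| ≤ ε̄ for all x, y. Then for all x, y: |(g∘ψ − g)(x) − (g∘ψ − g)(y)| ≤ (C_g(1 + K^α))^{β/α} · (2 C_g ε̄^α)^{1 − β/α} · |x − y|^β. -/
/-- Hölder-seminorm interpolation estimate ("Case 2" of the proof of the flow interpolation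
lemma): if `g` is `α`-Hölder with constant `C_g`, `ψ` is `K`-Lipschitz and uniformly
`ε̄`-close to the identity, and `0 < β < α ≤ 1`, then
`|(g∘ψ − g)(x) − (g∘ψ − g)(y)| ≤ (C_g(1+K^α))^{β/α} (2C_g ε̄^α)^{1−β/α} |x−y|^β`. -/
theorem holder_flow_interpolation (d : ℕ) (hd : 1 ≤ d) (α β Cg K ε : ℝ)
    (hβ : 0 < β) (hβα : β < α) (hα : α ≤ 1) (hCg : 0 ≤ Cg) (hK : 0 ≤ K) (hε : 0 ≤ ε)
    (g : EuclideanSpace ℝ (Fin d) → ℝ)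
    (ψ : EuclideanSpace ℝ (Fin d) → EuclideanSpace ℝ (Fin d))
    (hg : ∀ x y, |g x - g y| ≤ Cg * ‖x - y‖ ^ α)
    (hψlip : ∀ x y, ‖ψ x - ψ y‖ ≤ K * ‖x - y‖)
    (hψid : ∀ x, ‖ψ x - x‖ ≤ ε) :
    ∀ x y, |(g (ψ x) - g x) - (g (ψ y) - g y)| ≤
      (Cg * (1 + K ^ α)) ^ (β / α) * (2 * Cg * ε ^ α) ^ (1 - β / α) * ‖x - y‖ ^ β := by
  intro x y
  have hα0 : 0 < α := hβ.trans hβα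
  set θ : ℝ := β / α with hθdef
  have hθ0 : 0 < θ := div_pos hβ hα0
  have hθ1 : θ < 1 := (div_lt_one hα0).mpr hβα
  set t : ℝ := ‖x - y‖ with htdef
  have ht0 : 0 ≤ t := norm_nonneg _
  set m : ℝ := |(g (ψ x) - g x) - (g (ψ y) - g y)| with hmdef
  have hm0 : 0 ≤ m := abs_nonneg _
  set A : ℝ := Cg * (1 + K ^ α) with hAdef
  set B : ℝ := 2 * Cg * ε ^ α with hBdef
  have hA0 : 0 ≤ A := mul_nonneg hCg (by positivity)
  have hB0 : 0 ≤ B := by positivity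
  -- Bound 1
  have hbound1 : m ≤ A * t ^ α := by
    have h1 : m ≤ |g (ψ x) - g (ψ y)| + |g x - g y| := by
      have : (g (ψ x) - g x) - (g (ψ y) - g y)
          = (g (ψ x) - g (ψ y)) - (g x - g y) := by ring
      rw [hmdef, this]
      exact abs_sub _ _
    have h2 : |g (ψ x) - g (ψ y)| ≤ Cg * (K ^ α * t ^ α) := by
      refine (hg _ _).trans ?_
      gcongr
      calc ‖ψ x - ψ y‖ ^ α ≤ (K * t) ^ α := by
            exact Real.rpow_le_rpow (norm_nonneg _) (hψlip x y) hα0.le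
        _ = K ^ α * t ^ α := Real.mul_rpow hK ht0
    have h3 : |g x - g y| ≤ Cg * t ^ α := hg x y
    calc m ≤ Cg * (K ^ α * t ^ α) + Cg * t ^ α := by linarith
      _ = A * t ^ α := by ring
  -- Bound 2
  have hbound2 : m ≤ B := by
    have h1 : m ≤ |g (ψ x) - g x| + |g (ψ y) - g y| := abs_sub _ _
    have h2 : |g (ψ x) - g x| ≤ Cg * ε ^ α := by
      refine (hg _ _).trans ?_
      gcongr
      · exact hψid x
    have h3 : |g (ψ y) - g y| ≤ Cg * ε ^ α := by
      refine (hg _ _).trans ?_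
      gcongr
      · exact hψid y
    calc m ≤ Cg * ε ^ α + Cg * ε ^ α := by linarith
      _ = B := by ring
  -- Interpolation
  have key : m ≤ (A * t ^ α) ^ θ * B ^ (1 - θ) := by
    have hm : m = m ^ θ * m ^ (1 - θ) := by
      rw [← Real.rpow_add' hm0 (by norm_num)]
      simp
    rw [hm]
    exact mul_le_mul (Real.rpow_le_rpow hm0 hbound1 hθ0.le)
      (Real.rpow_le_rpow hm0 hbound2 (by linarith))
      (Real.rpow_nonneg hm0 _) (Real.rpow_nonneg ((hm0.trans hbound1)) _)
  refine key.trans (le_of_eq ?_)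
  have : (A * t ^ α) ^ θ = A ^ θ * t ^ β := by
    rw [Real.mul_rpow hA0 (Real.rpow_nonneg ht0 _), ← Real.rpow_mul ht0]
    congr 1
    rw [hθdef]
    field_simp
  rw [this]; ring
end
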